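/- Let a,b,c,d ∈ ℂ and n ∈ ℕ, and define the Wilson polynomial function y : ℂ → ℂ by y(x) = Σ_{k=0}^{n} [(−n)_k·(n + a + b + c + d − 1)_k / k!]·(a+b+k)_{n−k}·(a+c+k)_{n−k}·(a+d+k)_{n−k}·∏_{j=0}^{k−1}((a + j)² + x²). Then for every x ∈ ℂ with x·(x − i/2)·(x + i/2) ≠ 0: (x⁴ − (ab + ac + ad + bc + bd + cd)·x² + abcd)·(𝒟(𝒟y))(x) + ((a + b + c + d)·x² − (abc + abd + acd + bcd))·(𝒮(𝒟y))(x) − n·(n − 1 + a + b + c + d)·y(x) = 0. -/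

import Mathlib

open Complex Finset

/-- Wilson divided-difference operator. -/
noncomputable def Dw (f : ℂ → ℂ) (x : ℂ) : ℂ :=
  (f (x + I/2) - f (x - I/2)) / (2 * I * x)

/-- Averaging operator. -/
noncomputable def Sw (f : ℂ → ℂ) (x : ℂ) : ℂ :=
  (f (x + I/2) + f (x - I/2)) / 2

/-- Pochhammer symbol (t)_m = ∏_{j=0}^{m−1}(t + j). -/
noncomputable def poch (t : ℂ) (m : ℕ) : ℂ :=
  ∏ j ∈ Finset.range m, (t + j)

/-- The Wilson polynomial W_n(x²; a,b,c,d) in division-free form. -/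
noncomputable def wilson (a b c d : ℂ) (n : ℕ) (x : ℂ) : ℂ :=
  ∑ k ∈ Finset.range (n+1),
    (poch (-(n : ℂ)) k * poch ((n : ℂ) + a + b + c + d - 1) k / (Nat.factorial k : ℂ))
      * poch (a + b + k) (n - k) * poch (a + c + k) (n - k) * poch (a + d + k) (n - k)
      * ∏ j ∈ Finset.range k, ((a + j)^2 + x^2)

/-!
Write `W_n = ∑ c_k φ_k` with `φ_k(x) = (a+ix)_k (a-ix)_k`, and let `L` be the operator of the
theorem multiplied by `2ix(2ix-1)(2ix+1)`. Shifting `x` by `±i` shifts `a ± ix` by `∓1`, which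
gives `L φ_{k+1} = 2ix(2ix-1)(2ix+1) (λ_{k+1} φ_{k+1} - (k+1)(a+b+k)(a+c+k)(a+d+k) φ_k)` with
`λ_k = k(k-1+a+b+c+d)`. The coefficients satisfy
`c_{k+1} (k+1)(a+b+k)(a+c+k)(a+d+k) = c_k (λ_k - λ_n)`, so `∑ c_k L φ_k` telescopes to
`2ix(2ix-1)(2ix+1) λ_n W_n`.
-/

lemma poch_succ (t : ℂ) (k : ℕ) : poch t (k + 1) = poch t k * (t + k) := by
  simp [poch, prod_range_succ]

lemma poch_succ' (t : ℂ) (k : ℕ) : poch t (k + 1) = t * poch (t + 1) k := by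
  rw [poch, prod_range_succ', poch, mul_comm]
  congr 1
  · norm_num
  · exact prod_congr rfl fun j _ => by push_cast; ring

lemma poch_sub_one_succ (t : ℂ) (k : ℕ) : poch (t - 1) (k + 1) = (t - 1) * poch t k := by
  rw [poch_succ', sub_add_cancel]

lemma mul_poch_add_one_succ (t : ℂ) (k : ℕ) :
    t * poch (t + 1) (k + 1) = poch t k * (t + k) * (t + k + 1) := by
  rw [← poch_succ', poch_succ, poch_succ]
  push_cast
  ring

namespace Wilson

noncomputable def basis (a : ℂ) (k : ℕ) (x : ℂ) : ℂ :=
  ∏ j ∈ range k, ((a + j) ^ 2 + x ^ 2)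

lemma basis_eq_poch_mul_poch (a x : ℂ) (k : ℕ) :
    basis a k x = poch (a + I * x) k * poch (a - I * x) k := by
  rw [basis, poch, poch, ← prod_mul_distrib]
  exact prod_congr rfl fun j _ => by linear_combination x ^ 2 * I_sq

lemma basis_succ (a x : ℂ) (k : ℕ) :
    basis a (k + 1) x = basis a k x * ((a + I * x + k) * (a - I * x + k)) := by
  rw [basis_eq_poch_mul_poch, basis_eq_poch_mul_poch, poch_succ, poch_succ]
  ring

lemma mul_basis_succ_add_I (a x : ℂ) (k : ℕ) :
    (a - I * x) * basis a (k + 1) (x + I)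
      = (a + I * x - 1) * (a - I * x + k) * (a - I * x + k + 1) * basis a k x := by
  have hu : a + I * (x + I) = a + I * x - 1 := by linear_combination I_sq
  have hv : a - I * (x + I) = a - I * x + 1 := by linear_combination -I_sq
  rw [basis_eq_poch_mul_poch, basis_eq_poch_mul_poch, hu, hv, poch_sub_one_succ]
  linear_combination (a + I * x - 1) * poch (a + I * x) k * mul_poch_add_one_succ (a - I * x) k

lemma mul_basis_succ_sub_I (a x : ℂ) (k : ℕ) :
    (a + I * x) * basis a (k + 1) (x - I)
      = (a - I * x - 1) * (a + I * x + k) * (a + I * x + k + 1) * basis a k x := by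
  have hu : a + I * (x - I) = a + I * x + 1 := by linear_combination -I_sq
  have hv : a - I * (x - I) = a - I * x - 1 := by linear_combination I_sq
  rw [basis_eq_poch_mul_poch, basis_eq_poch_mul_poch, hu, hv, poch_sub_one_succ]
  linear_combination (a - I * x - 1) * poch (a - I * x) k * mul_poch_add_one_succ (a + I * x) k

/-- `2ix(2ix-1)(2ix+1) (p 𝒟𝒟f + q 𝒮𝒟f)` for the polynomials `p, q` of the theorem: the factors
`(a ∓ ix)(b ∓ ix)(c ∓ ix)(d ∓ ix)` are `p ± ixq`. -/
noncomputable def diffOp (a b c d : ℂ) (f : ℂ → ℂ) (x : ℂ) : ℂ :=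
  (a - I * x) * (b - I * x) * (c - I * x) * (d - I * x) * (2 * I * x + 1) * (f (x + I) - f x)
    - (a + I * x) * (b + I * x) * (c + I * x) * (d + I * x) * (2 * I * x - 1) * (f x - f (x - I))

lemma diffOp_sum {ι : Type*} (a b c d : ℂ) (s : Finset ι) (w : ι → ℂ) (f : ι → ℂ → ℂ)
    (x : ℂ) :
    diffOp a b c d (fun t => ∑ i ∈ s, w i * f i t) x
      = ∑ i ∈ s, w i * diffOp a b c d (f i) x := by
  simp only [diffOp, ← sum_sub_distrib, mul_sum]
  exact sum_congr rfl fun i _ => by ring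

lemma diffOp_basis_zero (a b c d x : ℂ) : diffOp a b c d (basis a 0) x = 0 := by
  simp [diffOp, basis]

noncomputable def eigenvalue (a b c d : ℂ) (k : ℕ) : ℂ :=
  k * (k - 1 + a + b + c + d)

lemma diffOp_basis_succ (a b c d x : ℂ) (k : ℕ) :
    diffOp a b c d (basis a (k + 1)) x
      = 2 * I * x * (2 * I * x - 1) * (2 * I * x + 1)
        * (eigenvalue a b c d (k + 1) * basis a (k + 1) x
          - (k + 1) * (a + b + k) * (a + c + k) * (a + d + k) * basis a k x) := by
  unfold diffOp eigenvalue
  push_cast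
  linear_combination
    (b - I * x) * (c - I * x) * (d - I * x) * (2 * I * x + 1) * mul_basis_succ_add_I a x k
    + (b + I * x) * (c + I * x) * (d + I * x) * (2 * I * x - 1) * mul_basis_succ_sub_I a x k
    - (2 * I * x * (2 * I * x - 1) * (2 * I * x + 1) * (k + 1) * (k + a + b + c + d)
      + (a - I * x) * (b - I * x) * (c - I * x) * (d - I * x) * (2 * I * x + 1)
      + (a + I * x) * (b + I * x) * (c + I * x) * (d + I * x) * (2 * I * x - 1))
      * basis_succ a x k

noncomputable def coeff (a b c d : ℂ) (n k : ℕ) : ℂ :=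
  poch (-(n : ℂ)) k * poch ((n : ℂ) + a + b + c + d - 1) k / (Nat.factorial k : ℂ)
    * poch (a + b + k) (n - k) * poch (a + c + k) (n - k) * poch (a + d + k) (n - k)

lemma wilson_eq_sum (a b c d : ℂ) (n : ℕ) (x : ℂ) :
    wilson a b c d n x = ∑ k ∈ range (n + 1), coeff a b c d n k * basis a k x :=
  rfl

lemma coeff_succ_mul (a b c d : ℂ) {n k : ℕ} (hk : k < n) :
    coeff a b c d n (k + 1) * ((k + 1) * (a + b + k) * (a + c + k) * (a + d + k))
      = coeff a b c d n k * (eigenvalue a b c d k - eigenvalue a b c d n) := by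
  have hnk : n - k = n - (k + 1) + 1 := by omega
  have hpoch : ∀ t : ℂ,
      poch (t + k) (n - k) = (t + k) * poch (t + ((k + 1 : ℕ) : ℂ)) (n - (k + 1)) := fun t => by
    rw [hnk, poch_succ']; push_cast; ring_nf
  have hfact : ((k + 1).factorial : ℂ) = (k + 1) * k.factorial := by
    rw [Nat.factorial_succ]; push_cast; ring
  have hk1 : (k + 1 : ℂ) ≠ 0 := Nat.cast_add_one_ne_zero k
  simp only [coeff, eigenvalue, poch_succ, hpoch, hfact]
  field_simp
  ring

lemma diffOp_wilson (a b c d : ℂ) (n : ℕ) (x : ℂ) :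
    diffOp a b c d (wilson a b c d n) x
      = 2 * I * x * (2 * I * x - 1) * (2 * I * x + 1)
        * (eigenvalue a b c d n * wilson a b c d n x) := by
  set W := 2 * I * x * (2 * I * x - 1) * (2 * I * x + 1)
  set g : ℕ → ℂ := fun k => eigenvalue a b c d k * (coeff a b c d n k * basis a k x)
  have hg0 : g 0 = 0 := by simp [g, eigenvalue]
  have hterm : ∀ k < n, coeff a b c d n (k + 1) * diffOp a b c d (basis a (k + 1)) x
      = W * (g (k + 1) - g k + eigenvalue a b c d n * (coeff a b c d n k * basis a k x)) := by
    intro k hk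
    rw [diffOp_basis_succ]
    linear_combination -W * basis a k x * coeff_succ_mul a b c d hk
  calc diffOp a b c d (wilson a b c d n) x
      = ∑ k ∈ range (n + 1), coeff a b c d n k * diffOp a b c d (basis a k) x :=
        diffOp_sum a b c d _ _ _ x
    _ = ∑ k ∈ range n, coeff a b c d n (k + 1) * diffOp a b c d (basis a (k + 1)) x := by
        rw [sum_range_succ', diffOp_basis_zero, mul_zero, add_zero]
    _ = ∑ k ∈ range n,
          W * (g (k + 1) - g k + eigenvalue a b c d n * (coeff a b c d n k * basis a k x)) :=
        sum_congr rfl fun k hk => hterm k (mem_range.1 hk)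
    _ = W * (g n - g 0
          + eigenvalue a b c d n * ∑ k ∈ range n, coeff a b c d n k * basis a k x) := by
        rw [← mul_sum, sum_add_distrib, sum_range_sub, mul_sum]
    _ = W * (eigenvalue a b c d n * wilson a b c d n x) := by
        rw [wilson_eq_sum, sum_range_succ, hg0]
        ring

lemma Dw_apply_add_I_div_two (f : ℂ → ℂ) (x : ℂ) :
    Dw f (x + I / 2) = (f (x + I) - f x) / (2 * I * x - 1) := by
  rw [Dw, show x + I / 2 + I / 2 = x + I by ring, show x + I / 2 - I / 2 = x by ring,
    show 2 * I * (x + I / 2) = 2 * I * x - 1 by linear_combination I_mul_I]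

lemma Dw_apply_sub_I_div_two (f : ℂ → ℂ) (x : ℂ) :
    Dw f (x - I / 2) = (f x - f (x - I)) / (2 * I * x + 1) := by
  rw [Dw, show x - I / 2 + I / 2 = x by ring, show x - I / 2 - I / 2 = x - I by ring,
    show 2 * I * (x - I / 2) = 2 * I * x + 1 by linear_combination -I_mul_I]

lemma mul_Dw_Dw_add_mul_Sw_Dw (a b c d : ℂ) (f : ℂ → ℂ) {x : ℂ}
    (hx : 2 * I * x * (2 * I * x - 1) * (2 * I * x + 1) ≠ 0) :
    (x ^ 4 - (a*b + a*c + a*d + b*c + b*d + c*d) * x ^ 2 + a*b*c*d) * Dw (Dw f) x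
      + ((a + b + c + d) * x ^ 2 - (a*b*c + a*b*d + a*c*d + b*c*d)) * Sw (Dw f) x
      = diffOp a b c d f x / (2 * I * x * (2 * I * x - 1) * (2 * I * x + 1)) := by
  obtain ⟨h0m, hp⟩ := mul_ne_zero_iff.1 hx
  obtain ⟨h0, hm⟩ := mul_ne_zero_iff.1 h0m
  -- once `x` enters only through `ix`, the identity holds for polynomials in `ix`
  have hx2 : x ^ 2 = -(I * x) ^ 2 := by linear_combination x ^ 2 * I_sq
  rw [show x ^ 4 = (x ^ 2) ^ 2 by ring, hx2, Dw, Sw, Dw_apply_add_I_div_two,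
    Dw_apply_sub_I_div_two, diffOp, div_sub_div _ _ hm hp, div_add_div _ _ hm hp, div_div, div_div,
    mul_div_assoc', mul_div_assoc', div_add_div _ _ (by simp [hm, hp, h0]) (by simp [hm, hp]),
    div_eq_div_iff (by simp [hm, hp, h0]) hx]
  ring

end Wilson

open Wilson in
theorem stmt_15 (a b c d : ℂ) (n : ℕ) :
    ∀ x : ℂ, x * (x - I/2) * (x + I/2) ≠ 0 →
      (x^4 - (a*b + a*c + a*d + b*c + b*d + c*d) * x^2 + a*b*c*d)
          * Dw (Dw (fun t => wilson a b c d n t)) x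
        + ((a + b + c + d) * x^2 - (a*b*c + a*b*d + a*c*d + b*c*d))
          * Sw (Dw (fun t => wilson a b c d n t)) x
        - (n : ℂ) * ((n : ℂ) - 1 + a + b + c + d) * wilson a b c d n x = 0 := by
  intro x hx
  have hW : 2 * I * x * (2 * I * x - 1) * (2 * I * x + 1) ≠ 0 := by
    rw [show 2 * I * x * (2 * I * x - 1) * (2 * I * x + 1) = -8 * I * (x * (x - I/2) * (x + I/2))
      by linear_combination (8 * I * x ^ 3 - 2 * I * x) * I_sq]
    exact mul_ne_zero (by simp) hx
  rw [mul_Dw_Dw_add_mul_Sw_Dw a b c d _ hW, diffOp_wilson, mul_div_cancel_left₀ _ hW, eigenvalue]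
  ring
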